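/- arXiv:2412.02123 — 3 statements merged into one kernel-verified Lean document; each statement's English description precedes it below -/
import Mathlib

section
/- Let K = K(n,m,Λ) be a Bedford–McMullen carpet (n > m ≥ 2). Then K contains no oblique line segment of positive length: for all a, b ∈ ℝ² such that both coordinates of the vector b − a are nonzero, the closed segment [a,b] is not contained in K. -/
open scoped BigOperators

/-- The Bedford–McMullen carpet `K(n,m,Λ)`: the set of points
`(Σ_k i_k n^{-k}, Σ_k j_k m^{-k})` with `(i_k, j_k) ∈ Λ` for all `k ≥ 1`. -/
def BMCarpet (n m : ℕ) (Λ : Finset (ℕ × ℕ)) : Set (ℝ × ℝ) :=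
  { p | ∃ d : ℕ → ℕ × ℕ, (∀ k, d k ∈ Λ) ∧
      p.1 = ∑' k : ℕ, ((d k).1 : ℝ) / (n : ℝ) ^ (k + 1) ∧
      p.2 = ∑' k : ℕ, ((d k).2 : ℝ) / (m : ℝ) ^ (k + 1) }

/-- `f` is a similitude of the Euclidean plane with ratio `l`. -/
def IsSimilitude (f : ℝ × ℝ → ℝ × ℝ) (l : ℝ) : Prop :=
  ∀ x y : ℝ × ℝ,
    Real.sqrt (((f x).1 - (f y).1) ^ 2 + ((f x).2 - (f y).2) ^ 2)
      = l * Real.sqrt ((x.1 - y.1) ^ 2 + (x.2 - y.2) ^ 2)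

/-- `f` is oblique: both coordinates of `f (1,0) - f (0,0)` are nonzero. -/
def Oblique (f : ℝ × ℝ → ℝ × ℝ) : Prop :=
  (f (1, 0)).1 - (f (0, 0)).1 ≠ 0 ∧ (f (1, 0)).2 - (f (0, 0)).2 ≠ 0

/-- `K` is contained in some affine line of the plane. -/
def OnALine (K : Set (ℝ × ℝ)) : Prop :=
  ∃ a b c : ℝ, (a ≠ 0 ∨ b ≠ 0) ∧ ∀ p ∈ K, a * p.1 + b * p.2 = c

set_option maxHeartbeats 1000000

namespace NoObliqueAux

lemma cast_pos (b : ℕ) (hb : 2 ≤ b) : (0:ℝ) < b := by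
  have : 0 < b := by omega
  exact_mod_cast this

lemma cast_lt (b : ℕ) (hb : 2 ≤ b) : (1:ℝ) < b := by
  have : 1 < b := by omega
  exact_mod_cast this

lemma summable_digits (b : ℕ) (hb : 2 ≤ b) (d : ℕ → ℕ) (hd : ∀ t, d t < b) :
    Summable (fun t : ℕ => (d t : ℝ) / (b : ℝ) ^ (t + 1)) := by
  have hb0 : (0:ℝ) < b := cast_pos b hb
  have hb1 : (1:ℝ) < b := cast_lt b hb
  have hgeo : Summable (fun t : ℕ => (1 / (b:ℝ)) ^ t) :=
    summable_geometric_of_lt_one (by positivity) (by rw [div_lt_one hb0]; exact hb1)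
  refine Summable.of_nonneg_of_le (fun t => by positivity) (fun t => ?_) hgeo
  have h1 : (d t : ℝ) ≤ (b : ℝ) := by exact_mod_cast (hd t).le
  rw [div_pow, one_pow, div_le_div_iff₀ (by positivity) (by positivity), one_mul]
  calc (d t : ℝ) * (b:ℝ)^t ≤ (b:ℝ) * (b:ℝ)^t :=
        mul_le_mul_of_nonneg_right h1 (by positivity)
    _ = (b:ℝ)^(t+1) := by ring

lemma tail_le (b : ℕ) (hb : 2 ≤ b) (d : ℕ → ℕ) (hd : ∀ t, d t < b) (k : ℕ) :
    ∑' t : ℕ, (d (t + k) : ℝ) / (b : ℝ) ^ (t + k + 1) ≤ 1 / (b : ℝ) ^ k := by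
  have hb0 : (0:ℝ) < b := cast_pos b hb
  have hb1 : (1:ℝ) < b := cast_lt b hb
  have hr0 : (0:ℝ) ≤ 1/(b:ℝ) := by positivity
  have hr1 : 1/(b:ℝ) < 1 := by rw [div_lt_one hb0]; exact hb1
  have hsum : Summable (fun t : ℕ => (d (t + k) : ℝ) / (b : ℝ) ^ (t + k + 1)) :=
    (summable_nat_add_iff k).2 (summable_digits b hb d hd)
  have hgeo : Summable (fun t : ℕ => (((b:ℝ) - 1) / (b:ℝ)^(k+1)) * (1/(b:ℝ)) ^ t) :=
    (summable_geometric_of_lt_one hr0 hr1).mul_left _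
  have hle : ∀ t : ℕ, (d (t + k) : ℝ) / (b : ℝ) ^ (t + k + 1)
      ≤ (((b:ℝ) - 1) / (b:ℝ)^(k+1)) * (1/(b:ℝ)) ^ t := by
    intro t
    have h1 : (d (t + k) : ℝ) ≤ (b : ℝ) - 1 := by
      have h2 : (d (t+k) : ℝ) + 1 ≤ (b:ℝ) := by exact_mod_cast hd (t+k)
      linarith
    have hpow : (b:ℝ) ^ (t + k + 1) = (b:ℝ)^(k+1) * (b:ℝ)^t := by
      rw [← pow_add]; ring_nf
    have hrhs : ((b:ℝ)-1)/(b:ℝ)^(k+1) * (1/(b:ℝ))^t = ((b:ℝ)-1)/((b:ℝ)^(k+1)*(b:ℝ)^t) := by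
      rw [div_pow, one_pow, div_mul_div_comm, mul_one]
    rw [hpow, hrhs]
    gcongr
  calc ∑' t : ℕ, (d (t + k) : ℝ) / (b : ℝ) ^ (t + k + 1)
      ≤ ∑' t : ℕ, (((b:ℝ) - 1) / (b:ℝ)^(k+1)) * (1/(b:ℝ)) ^ t :=
        Summable.tsum_le_tsum hle hsum hgeo
    _ = (((b:ℝ) - 1) / (b:ℝ)^(k+1)) * (1 - 1/(b:ℝ))⁻¹ := by
        rw [tsum_mul_left, tsum_geometric_of_lt_one hr0 hr1]
    _ = 1 / (b:ℝ)^k := by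
        have hbne : (b:ℝ) ≠ 0 := ne_of_gt hb0
        have hbm1 : (b:ℝ) - 1 ≠ 0 := by intro h; nlinarith
        rw [pow_succ]
        field_simp

lemma digit_eq (b : ℕ) (hb : 2 ≤ b) (d : ℕ → ℕ) (hd : ∀ t, d t < b) (k : ℕ) (u : ℤ)
    (h1 : (u : ℝ) < (b:ℝ)^(k+1) * ∑' t : ℕ, (d t : ℝ) / (b:ℝ)^(t+1))
    (h2 : (b:ℝ)^(k+1) * ∑' t : ℕ, (d t : ℝ) / (b:ℝ)^(t+1) < (u:ℝ) + 1) :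
    ((d k : ℤ)) = u % (b:ℤ) := by
  have hb0 : (0:ℝ) < b := cast_pos b hb
  set f : ℕ → ℝ := fun t => (d t : ℝ) / (b:ℝ)^(t+1) with hf
  have hsum : Summable f := summable_digits b hb d hd
  have hsplit : (∑ t ∈ Finset.range (k+1), f t) + (∑' t : ℕ, f (t + (k+1))) = ∑' t : ℕ, f t :=
    Summable.sum_add_tsum_nat_add (k+1) hsum
  set N : ℕ := ∑ t ∈ Finset.range (k+1), d t * b^(k - t) with hNdef
  have hN : (∑ t ∈ Finset.range (k+1), f t) = (N:ℝ)/(b:ℝ)^(k+1) := by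
    rw [hNdef]
    push_cast
    rw [Finset.sum_div]
    refine Finset.sum_congr rfl fun t ht => ?_
    have htk : t ≤ k := by
      have := Finset.mem_range.1 ht; omega
    have hexp : (b:ℝ)^(k-t) * (b:ℝ)^(t+1) = (b:ℝ)^(k+1) := by
      rw [← pow_add]; congr 1; omega
    rw [div_eq_div_iff (by positivity) (by positivity)]
    rw [mul_assoc, hexp]
  set T : ℝ := ∑' t : ℕ, f (t + (k+1)) with hT
  have hT0 : 0 ≤ T := tsum_nonneg (fun t => by
    have : (0:ℝ) ≤ (d (t + (k+1)) : ℝ) / (b:ℝ)^(t + (k+1) + 1) := by positivity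
    simpa [hf] using this)
  have hT1 : T ≤ 1/(b:ℝ)^(k+1) := by
    have := tail_le b hb d hd (k+1)
    simpa [hT, hf] using this
  have hS : (∑' t : ℕ, f t) = (N:ℝ)/(b:ℝ)^(k+1) + T := by rw [← hsplit, hN]
  have hBpos : (0:ℝ) < (b:ℝ)^(k+1) := by positivity
  have hprod : (b:ℝ)^(k+1) * (∑' t : ℕ, f t) = (N:ℝ) + (b:ℝ)^(k+1) * T := by
    rw [hS]; field_simp
  have hBT0 : 0 ≤ (b:ℝ)^(k+1) * T := by positivity
  have hBT1 : (b:ℝ)^(k+1) * T ≤ 1 := by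
    calc (b:ℝ)^(k+1) * T ≤ (b:ℝ)^(k+1) * (1/(b:ℝ)^(k+1)) :=
          mul_le_mul_of_nonneg_left hT1 (le_of_lt hBpos)
      _ = 1 := by field_simp
  have hu1 : (u:ℝ) < (N:ℝ) + 1 := by
    rw [hprod] at h1; linarith
  have hu2 : (N:ℝ) < (u:ℝ) + 1 := by
    rw [hprod] at h2; linarith
  have hu1' : u < (N:ℤ) + 1 := by exact_mod_cast hu1
  have hu2' : (N:ℤ) < u + 1 := by exact_mod_cast hu2
  have huN : u = (N:ℤ) := by omega
  have hmod : N % b = d k := by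
    have hstep : N = b * (∑ t ∈ Finset.range k, d t * b^(k-1-t)) + d k := by
      rw [hNdef, Finset.sum_range_succ]
      have hkk : k - k = 0 := by omega
      rw [hkk, pow_zero, mul_one, Finset.mul_sum]
      congr 1
      refine Finset.sum_congr rfl fun t ht => ?_
      have htk : t < k := Finset.mem_range.1 ht
      have : k - t = (k - 1 - t) + 1 := by omega
      rw [this, pow_succ]
      ring
    rw [hstep, Nat.mul_add_mod]
    exact Nat.mod_eq_of_lt (hd k)
  rw [huN]
  rw [show (N:ℤ) % (b:ℤ) = ((N % b : ℕ) : ℤ) by push_cast; ring]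
  rw [hmod]

lemma cell_core (b : ℕ) (hb : 2 ≤ b) (r : ℕ) (hr : r < b) (k : ℕ) (y0 y1 : ℝ)
    (h : y0 + 2 / (b:ℝ)^k ≤ y1) :
    ∃ u : ℤ, u % (b:ℤ) = (r:ℤ) ∧ y0 < (u:ℝ)/(b:ℝ)^(k+1) ∧ ((u:ℝ)+1)/(b:ℝ)^(k+1) ≤ y1 := by
  have hb0 : (0:ℝ) < b := cast_pos b hb
  have hk0 : (0:ℝ) < (b:ℝ)^k := by positivity
  have hK0 : (0:ℝ) < (b:ℝ)^(k+1) := by positivity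
  have hpow : (b:ℝ)^(k+1) = (b:ℝ)^k * b := pow_succ _ _
  have hdiv : 2 / (b:ℝ)^k * (b:ℝ)^k = 2 := by field_simp
  set t : ℤ := ⌊(b:ℝ)^k * y0⌋ + 1 with ht
  refine ⟨(r:ℤ) + (b:ℤ) * t, ?_, ?_, ?_⟩
  · rw [Int.add_mul_emod_self_left]
    exact Int.emod_eq_of_lt (by positivity) (by exact_mod_cast hr)
  · have h1 : (b:ℝ)^k * y0 < (t:ℝ) := by
      rw [ht]; push_cast
      exact Int.lt_floor_add_one _
    have hr0 : (0:ℝ) ≤ (r:ℝ) := by positivity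
    rw [lt_div_iff₀ hK0, hpow]
    push_cast
    have h1b : (b:ℝ)^k * y0 * b < (t:ℝ) * b := mul_lt_mul_of_pos_right h1 hb0
    linarith
  · have h2 : (t:ℝ) ≤ (b:ℝ)^k * y0 + 1 := by
      rw [ht]; push_cast
      have := Int.floor_le ((b:ℝ)^k * y0)
      linarith
    have hrb : (r:ℝ) + 1 ≤ (b:ℝ) := by exact_mod_cast hr
    rw [div_le_iff₀ hK0, hpow]
    push_cast
    have hstep1 : y0 * (b:ℝ)^k + 2 ≤ y1 * (b:ℝ)^k := by
      have hmul := mul_le_mul_of_nonneg_right h (le_of_lt hk0)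
      linarith [hmul, hdiv]
    have hstep2 : y0 * (b:ℝ)^k * b + 2*b ≤ y1 * (b:ℝ)^k * b := by
      have := mul_le_mul_of_nonneg_right hstep1 (le_of_lt hb0)
      linarith [this]
    have hA : (b:ℝ)*(t:ℝ) ≤ (b:ℝ)*((b:ℝ)^k*y0 + 1) := mul_le_mul_of_nonneg_left h2 (le_of_lt hb0)
    linarith [hA, hstep2, hrb]

lemma cell (b : ℕ) (hb : 2 ≤ b) (r : ℕ) (hr : r < b) (k : ℕ) (c δ α β : ℝ)
    (hδ : δ ≠ 0) (hk : 2 / (b:ℝ)^k ≤ |δ| * (β - α)) :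
    ∃ u : ℤ, u % (b:ℤ) = (r:ℤ) ∧ ∃ α' β' : ℝ, α ≤ α' ∧ β' ≤ β ∧
      β' - α' = 1 / ((b:ℝ)^(k+1) * |δ|) ∧
      ∀ θ : ℝ, α' < θ → θ < β' →
        (u:ℝ) < (b:ℝ)^(k+1) * (c + δ * θ) ∧ (b:ℝ)^(k+1) * (c + δ * θ) < (u:ℝ) + 1 := by
  have hb0 : (0:ℝ) < b := cast_pos b hb
  have hK0 : (0:ℝ) < (b:ℝ)^(k+1) := by positivity
  have hB' : ((b:ℝ)^(k+1)) ≠ 0 := ne_of_gt hK0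
  rcases hδ.lt_or_gt with hneg | hpos
  · -- δ < 0
    have habs : |δ| = -δ := abs_of_neg hneg
    have hδ' : δ ≠ 0 := ne_of_lt hneg
    obtain ⟨u, hu, hy0, hy1⟩ := cell_core b hb r hr k (c + δ * β) (c + δ * α)
      (by rw [habs] at hk; nlinarith [hk])
    refine ⟨u, hu, (((u:ℝ)+1)/(b:ℝ)^(k+1) - c)/δ, ((u:ℝ)/(b:ℝ)^(k+1) - c)/δ, ?_, ?_, ?_, ?_⟩
    · rw [le_div_iff_of_neg hneg]
      linarith [hy1]
    · rw [div_le_iff_of_neg hneg]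
      linarith [hy0]
    · rw [habs]
      field_simp
      ring
    · intro θ hθ1 hθ2
      rw [div_lt_iff_of_neg hneg] at hθ1
      rw [lt_div_iff_of_neg hneg] at hθ2
      constructor
      · have hlt : (u:ℝ)/(b:ℝ)^(k+1) < c + δ * θ := by linarith [hθ2]
        calc (u:ℝ) = (b:ℝ)^(k+1) * ((u:ℝ)/(b:ℝ)^(k+1)) := by field_simp
          _ < (b:ℝ)^(k+1) * (c + δ * θ) := mul_lt_mul_of_pos_left hlt hK0
      · have hlt : c + δ * θ < ((u:ℝ)+1)/(b:ℝ)^(k+1) := by linarith [hθ1]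
        calc (b:ℝ)^(k+1) * (c + δ * θ) < (b:ℝ)^(k+1) * (((u:ℝ)+1)/(b:ℝ)^(k+1)) :=
              mul_lt_mul_of_pos_left hlt hK0
          _ = (u:ℝ)+1 := by field_simp
  · -- δ > 0
    have habs : |δ| = δ := abs_of_pos hpos
    have hδ' : δ ≠ 0 := ne_of_gt hpos
    obtain ⟨u, hu, hy0, hy1⟩ := cell_core b hb r hr k (c + δ * α) (c + δ * β)
      (by rw [habs] at hk; nlinarith [hk])
    refine ⟨u, hu, ((u:ℝ)/(b:ℝ)^(k+1) - c)/δ, (((u:ℝ)+1)/(b:ℝ)^(k+1) - c)/δ, ?_, ?_, ?_, ?_⟩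
    · rw [le_div_iff₀ hpos]
      linarith [hy0]
    · rw [div_le_iff₀ hpos]
      linarith [hy1]
    · rw [habs]
      field_simp
      ring
    · intro θ hθ1 hθ2
      rw [div_lt_iff₀ hpos] at hθ1
      rw [lt_div_iff₀ hpos] at hθ2
      constructor
      · have hlt : (u:ℝ)/(b:ℝ)^(k+1) < c + δ * θ := by linarith [hθ1]
        calc (u:ℝ) = (b:ℝ)^(k+1) * ((u:ℝ)/(b:ℝ)^(k+1)) := by field_simp
          _ < (b:ℝ)^(k+1) * (c + δ * θ) := mul_lt_mul_of_pos_left hlt hK0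
      · have hlt : c + δ * θ < ((u:ℝ)+1)/(b:ℝ)^(k+1) := by linarith [hθ2]
        calc (b:ℝ)^(k+1) * (c + δ * θ) < (b:ℝ)^(k+1) * (((u:ℝ)+1)/(b:ℝ)^(k+1)) :=
              mul_lt_mul_of_pos_left hlt hK0
          _ = (u:ℝ)+1 := by field_simp

end NoObliqueAux

open NoObliqueAux in
theorem no_oblique_segment'
    (n m : ℕ) (Λ : Finset (ℕ × ℕ))
    (hm : 2 ≤ m) (hnm : m < n)
    (hΛsub : Λ ⊆ Finset.range n ×ˢ Finset.range m)
    (hΛ1 : 1 < Λ.card) (hΛ2 : Λ.card < m * n) :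
    ∀ a b : ℝ × ℝ, b.1 - a.1 ≠ 0 → b.2 - a.2 ≠ 0 →
      ¬ (segment ℝ a b ⊆ { p : ℝ × ℝ | ∃ d : ℕ → ℕ × ℕ, (∀ k, d k ∈ Λ) ∧
        p.1 = ∑' k : ℕ, ((d k).1 : ℝ) / (n : ℝ) ^ (k + 1) ∧
        p.2 = ∑' k : ℕ, ((d k).2 : ℝ) / (m : ℝ) ^ (k + 1) }) := by
  intro a b hΔx hΔy hsub
  have hn : 2 ≤ n := by omega
  have hm0 : (0:ℝ) < m := cast_pos m hm
  have hn0 : (0:ℝ) < n := cast_pos n hn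
  have hm1 : (1:ℝ) < m := cast_lt m hm
  have hmn : (m:ℝ) < n := by exact_mod_cast hnm
  set Δx : ℝ := b.1 - a.1 with hΔxdef
  set Δy : ℝ := b.2 - a.2 with hΔydef
  have hΔx0 : 0 < |Δx| := abs_pos.2 hΔx
  have hΔy0 : 0 < |Δy| := abs_pos.2 hΔy
  -- missing pair
  have hmiss : ∃ q ∈ Finset.range n ×ˢ Finset.range m, q ∉ Λ := by
    by_contra hcon
    push_neg at hcon
    have hsub' : Finset.range n ×ˢ Finset.range m ⊆ Λ := fun q hq => hcon q hq
    have hcard := Finset.card_le_card hsub'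
    rw [Finset.card_product, Finset.card_range, Finset.card_range] at hcard
    have : m * n = n * m := Nat.mul_comm m n
    omega
  obtain ⟨⟨i, j⟩, hij_mem, hij_not⟩ := hmiss
  have hij : i < n ∧ j < m := by
    have := Finset.mem_product.1 hij_mem
    exact ⟨Finset.mem_range.1 this.1, Finset.mem_range.1 this.2⟩
  -- choose k
  obtain ⟨k1, hk1⟩ := pow_unbounded_of_one_lt (R := ℝ) (2/|Δy|) hm1
  have hnm1 : (1:ℝ) < (n:ℝ)/(m:ℝ) := by rw [lt_div_iff₀ hm0]; linarith
  obtain ⟨k2, hk2⟩ := pow_unbounded_of_one_lt (R := ℝ) (2*(m:ℝ)*|Δy|/|Δx|) hnm1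
  set k := max k1 k2 with hkdef
  have hm1' : (1:ℝ) ≤ m := le_of_lt hm1
  have hmk : (m:ℝ)^k1 ≤ (m:ℝ)^k := pow_le_pow_right₀ hm1' (le_max_left _ _)
  have hnmk : ((n:ℝ)/(m:ℝ))^k2 ≤ ((n:ℝ)/(m:ℝ))^k := pow_le_pow_right₀ (le_of_lt hnm1) (le_max_right _ _)
  have hmk0 : (0:ℝ) < (m:ℝ)^k := by positivity
  have hnk0 : (0:ℝ) < (n:ℝ)^k := by positivity
  have hMk0 : (0:ℝ) < (m:ℝ)^(k+1) := by positivity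
  -- first inequality : 2/m^k ≤ |Δy| * (1 - 0)
  have hkm : 2/(m:ℝ)^k ≤ |Δy| * (1 - 0) := by
    have h1 : 2/|Δy| < (m:ℝ)^k := lt_of_lt_of_le hk1 hmk
    rw [div_lt_iff₀ hΔy0] at h1
    rw [div_le_iff₀ hmk0]
    nlinarith
  -- second inequality : 2/n^k ≤ |Δx| * (1/(m^(k+1)*|Δy|))
  have hkn : 2/(n:ℝ)^k ≤ |Δx| * (1/((m:ℝ)^(k+1) * |Δy|)) := by
    have h2 : 2*(m:ℝ)*|Δy|/|Δx| < (n:ℝ)^k/(m:ℝ)^k := by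
      calc 2*(m:ℝ)*|Δy|/|Δx| < ((n:ℝ)/(m:ℝ))^k2 := hk2
        _ ≤ ((n:ℝ)/(m:ℝ))^k := hnmk
        _ = (n:ℝ)^k/(m:ℝ)^k := div_pow _ _ _
    rw [div_lt_div_iff₀ hΔx0 hmk0] at h2
    rw [div_le_iff₀ hnk0]
    rw [show |Δx| * (1/((m:ℝ)^(k+1)*|Δy|)) * (n:ℝ)^k = |Δx| * (n:ℝ)^k / ((m:ℝ)^(k+1) * |Δy|) by ring]
    rw [le_div_iff₀ (by positivity)]
    have hpow : (m:ℝ)^(k+1) = (m:ℝ)^k * m := pow_succ _ _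
    rw [hpow]
    nlinarith [h2]
  -- y-cell
  obtain ⟨v, hv, α1, β1, hα1, hβ1, hgap1, hcell1⟩ :=
    cell m hm j hij.2 k a.2 Δy 0 1 hΔy hkm
  -- x-cell
  obtain ⟨u, hu, α2, β2, hα2, hβ2, hgap2, hcell2⟩ :=
    cell n hn i hij.1 k a.1 Δx α1 β1 hΔx (by rw [hgap1]; exact hkn)
  set θ : ℝ := (α2 + β2)/2 with hθdef
  have hgap2pos : 0 < β2 - α2 := by rw [hgap2]; positivity
  have hθ1 : α2 < θ := by rw [hθdef]; linarith
  have hθ2 : θ < β2 := by rw [hθdef]; linarith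
  have hθα1 : α1 < θ := lt_of_le_of_lt hα2 hθ1
  have hθβ1 : θ < β1 := lt_of_lt_of_le hθ2 hβ2
  have hθ0 : (0:ℝ) ≤ θ := le_trans hα1 (le_of_lt hθα1)
  have hθI : θ ∈ Set.Icc (0:ℝ) 1 := ⟨hθ0, le_trans (le_of_lt hθβ1) hβ1⟩
  -- the point
  set p : ℝ × ℝ := a + θ • (b - a) with hpdef
  have hpseg : p ∈ segment ℝ a b := by
    rw [segment_eq_image']
    exact ⟨θ, hθI, rfl⟩
  obtain ⟨d, hdΛ, hx, hy⟩ := hsub hpseg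
  have hp1 : p.1 = a.1 + Δx * θ := by
    rw [hpdef]
    simp [Prod.fst_add, Prod.smul_fst, smul_eq_mul, hΔxdef]
    ring
  have hp2 : p.2 = a.2 + Δy * θ := by
    rw [hpdef]
    simp [Prod.snd_add, Prod.smul_snd, smul_eq_mul, hΔydef]
    ring
  have hd1 : ∀ t, (d t).1 < n := fun t =>
    Finset.mem_range.1 (Finset.mem_product.1 (hΛsub (hdΛ t))).1
  have hd2 : ∀ t, (d t).2 < m := fun t =>
    Finset.mem_range.1 (Finset.mem_product.1 (hΛsub (hdΛ t))).2
  have hx1 := hcell2 θ hθ1 hθ2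
  have hy1 := hcell1 θ hθα1 hθβ1
  have hxs : (a.1 + Δx * θ) = ∑' t : ℕ, ((d t).1 : ℝ) / (n:ℝ)^(t+1) := by rw [← hp1]; exact hx
  have hys : (a.2 + Δy * θ) = ∑' t : ℕ, ((d t).2 : ℝ) / (m:ℝ)^(t+1) := by rw [← hp2]; exact hy
  have e1 : (((d k).1 : ℤ)) = u % (n:ℤ) := by
    refine digit_eq n hn (fun t => (d t).1) hd1 k u ?_ ?_
    · rw [← hxs]; exact hx1.1
    · rw [← hxs]; exact hx1.2
  have e2 : (((d k).2 : ℤ)) = v % (m:ℤ) := by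
    refine digit_eq m hm (fun t => (d t).2) hd2 k v ?_ ?_
    · rw [← hys]; exact hy1.1
    · rw [← hys]; exact hy1.2
  have e1' : (d k).1 = i := by
    have : (((d k).1 : ℤ)) = (i:ℤ) := by rw [e1, hu]
    exact_mod_cast this
  have e2' : (d k).2 = j := by
    have : (((d k).2 : ℤ)) = (j:ℤ) := by rw [e2, hv]
    exact_mod_cast this
  apply hij_not
  have : d k = (i, j) := Prod.ext e1' e2'
  rw [← this]
  exact hdΛ k

theorem no_oblique_segment
    (n m : ℕ) (Λ : Finset (ℕ × ℕ))
    (hm : 2 ≤ m) (hnm : m < n)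
    (hΛsub : Λ ⊆ Finset.range n ×ˢ Finset.range m)
    (hΛ1 : 1 < Λ.card) (hΛ2 : Λ.card < m * n) :
    ∀ a b : ℝ × ℝ, b.1 - a.1 ≠ 0 → b.2 - a.2 ≠ 0 →
      ¬ (segment ℝ a b ⊆ BMCarpet n m Λ) :=
  no_oblique_segment' n m Λ hm hnm hΛsub hΛ1 hΛ2
end

section
/- Let K = K(n,m,Λ) be a Bedford–McMullen carpet and let (y_k)_{k≥1} be a sequence with y_k ∈ J for all k such that card(I_{y_k}) ≥ 2 for all sufficiently large k. Then there exists c > 0 such that for every p ≥ 1 and every basic open interval U of F_p, one has diam(F ∩ U) ≥ c · n^{−p}. -/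
open scoped BigOperators

/-- `I_j`: the digits of selected rectangles in the `j`-th row. -/
def rowDigits (Λ : Finset (ℕ × ℕ)) (j : ℕ) : Finset ℕ :=
  (Λ.filter fun p => p.2 = j).image Prod.fst

/-- The set `F = { Σ_{k≥1} x_k n^{-k} : x_k ∈ I_{y_k} for all k }` associated with a
row-digit sequence `y` (indexed so that `y k` is the digit `y_{k+1}` of the paper). -/
def rowSliceSet (n : ℕ) (Λ : Finset (ℕ × ℕ)) (y : ℕ → ℕ) : Set ℝ :=
  { x | ∃ d : ℕ → ℕ, (∀ k, (d k, y k) ∈ Λ) ∧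
      x = ∑' k : ℕ, ((d k) : ℝ) / (n : ℝ) ^ (k + 1) }

/-- Left endpoints of the basic (open) intervals of `F_p`: the numbers
`Σ_{k=1}^p x_k n^{-k}` with `x_k ∈ I_{y_k}`.  The basic open intervals of `F_p`
are the intervals `(a, a + n^{-p})` for `a` in this set. -/
def basicLeftEndpoints (n : ℕ) (Λ : Finset (ℕ × ℕ)) (y : ℕ → ℕ) (p : ℕ) : Set ℝ :=
  { a | ∃ d : ℕ → ℕ, (∀ k < p, (d k, y k) ∈ Λ) ∧
      a = ∑ k ∈ Finset.range p, ((d k) : ℝ) / (n : ℝ) ^ (k + 1) }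


lemma geom_repr (n : ℕ) (hn : 2 ≤ n) (p k : ℕ) :
    ((n:ℝ) - 1) / (n:ℝ) ^ (k + p + 1)
      = (((n:ℝ) - 1) / (n:ℝ) ^ (p + 1)) * ((n:ℝ)⁻¹) ^ k := by
  have hn0 : (n:ℝ) ≠ 0 := by
    have : 0 < n := by omega
    positivity
  rw [show k + p + 1 = k + (p+1) by ring, pow_add, inv_pow,
    mul_comm ((n:ℝ)^k), ← div_div, div_eq_mul_inv]

lemma geomSummable (n : ℕ) (hn : 2 ≤ n) (p : ℕ) :
    Summable (fun k : ℕ => ((n:ℝ) - 1) / (n:ℝ) ^ (k + p + 1)) := by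
  have hn1 : (1:ℝ) < (n:ℝ) := by exact_mod_cast hn
  have h0 : (0:ℝ) ≤ (n:ℝ)⁻¹ := by positivity
  have h1 : (n:ℝ)⁻¹ < 1 := by
    rw [inv_lt_one_iff₀]; right; exact hn1
  have := (summable_geometric_of_lt_one h0 h1).mul_left (((n:ℝ) - 1) / (n:ℝ) ^ (p + 1))
  apply this.congr
  intro k
  exact (geom_repr n hn p k).symm

lemma geom_tsum (n : ℕ) (hn : 2 ≤ n) (p : ℕ) :
    ∑' k : ℕ, ((n:ℝ) - 1) / (n:ℝ) ^ (k + p + 1) = ((n:ℝ) ^ p)⁻¹ := by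
  have hn1 : (1:ℝ) < (n:ℝ) := by exact_mod_cast hn
  have hn0 : (n:ℝ) ≠ 0 := by positivity
  have h0 : (0:ℝ) ≤ (n:ℝ)⁻¹ := by positivity
  have h1 : (n:ℝ)⁻¹ < 1 := by rw [inv_lt_one_iff₀]; right; exact hn1
  calc ∑' k : ℕ, ((n:ℝ) - 1) / (n:ℝ) ^ (k + p + 1)
      = ∑' k : ℕ, (((n:ℝ) - 1) / (n:ℝ) ^ (p + 1)) * ((n:ℝ)⁻¹) ^ k :=
        tsum_congr fun k => geom_repr n hn p k
    _ = (((n:ℝ) - 1) / (n:ℝ) ^ (p + 1)) * (1 - (n:ℝ)⁻¹)⁻¹ := by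
        rw [tsum_mul_left, tsum_geometric_of_lt_one h0 h1]
    _ = ((n:ℝ) ^ p)⁻¹ := by
        have h2 : (n:ℝ) - 1 ≠ 0 := by linarith
        have h3 : 1 - (n:ℝ)⁻¹ = ((n:ℝ) - 1) / n := by field_simp
        rw [h3, pow_succ]
        field_simp

lemma summable_digits (n : ℕ) (hn : 2 ≤ n) (d : ℕ → ℕ) (hd : ∀ k, d k < n) :
    Summable (fun k : ℕ => ((d k : ℝ)) / (n:ℝ) ^ (k + 1)) := by
  have hn0 : (0:ℝ) < (n:ℝ) := by exact_mod_cast (by omega : 0 < n)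
  apply Summable.of_nonneg_of_le (fun k => by positivity) (fun k => ?_)
    (by simpa using geomSummable n hn 0)
  have hdk : (d k : ℝ) ≤ (n:ℝ) - 1 := by
    have : (d k : ℝ) < (n:ℝ) := by exact_mod_cast hd k
    have h1 : d k + 1 ≤ n := hd k
    have : ((d k : ℕ) : ℝ) + 1 ≤ (n:ℝ) := by exact_mod_cast h1
    linarith
  have : (0:ℝ) < (n:ℝ) ^ (k + 1) := by positivity
  gcongr
theorem diam_of_slice_in_basic_interval
    (n m : ℕ) (Λ : Finset (ℕ × ℕ))
    (hm : 2 ≤ m) (hnm : m < n)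
    (hΛsub : Λ ⊆ Finset.range n ×ˢ Finset.range m)
    (hΛ1 : 1 < Λ.card) (hΛ2 : Λ.card < m * n)
    (y : ℕ → ℕ) (hy : ∀ k, ∃ i, (i, y k) ∈ Λ)
    (hbig : ∃ k₀ : ℕ, ∀ k ≥ k₀, 2 ≤ (rowDigits Λ (y k)).card) :
    ∃ c : ℝ, 0 < c ∧ ∀ p : ℕ, 1 ≤ p →
      ∀ a ∈ basicLeftEndpoints n Λ y p,
        c * ((n : ℝ) ^ p)⁻¹ ≤
          Metric.diam (rowSliceSet n Λ y ∩ Set.Ioo a (a + ((n : ℝ) ^ p)⁻¹)) := by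
  classical
  obtain ⟨k₀, hk₀⟩ := hbig
  have hn2 : 2 ≤ n := by omega
  have hn1 : (1:ℝ) < (n:ℝ) := by exact_mod_cast (by omega : 1 < n)
  have hn0 : (0:ℝ) < (n:ℝ) := by linarith
  have hdig : ∀ i j, (i, j) ∈ Λ → i < n := by
    intro i j h
    have := hΛsub h
    simp only [Finset.mem_product, Finset.mem_range] at this
    exact this.1
  have rowmem : ∀ i j, i ∈ rowDigits Λ j → (i, j) ∈ Λ := by
    intro i j h
    simp only [rowDigits, Finset.mem_image, Finset.mem_filter] at h
    obtain ⟨q, ⟨hq1, hq2⟩, hq3⟩ := h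
    have hq : q = (i, j) := by
      cases q
      simp_all
    rwa [← hq]
  have twodig : ∀ k, k₀ ≤ k → ∃ u v : ℕ, u < v ∧ (u, y k) ∈ Λ ∧ (v, y k) ∈ Λ := by
    intro k hk
    obtain ⟨u, hu, v, hv, huv⟩ := Finset.one_lt_card.mp (hk₀ k hk)
    rcases huv.lt_or_gt with h | h
    · exact ⟨u, v, h, rowmem _ _ hu, rowmem _ _ hv⟩
    · exact ⟨v, u, h, rowmem _ _ hv, rowmem _ _ hu⟩
  choose e he using hy
  refine ⟨((n:ℝ) ^ (k₀ + 2))⁻¹, by positivity, ?_⟩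
  intro p hp a ha
  obtain ⟨d, hd, had⟩ := ha
  set q := max p k₀ with hqdef
  have hpq : p ≤ q := le_max_left _ _
  have hk0q : k₀ ≤ q := le_max_right _ _
  obtain ⟨u, v, huv, hu, hv⟩ := twodig q hk0q
  obtain ⟨u₂, v₂, huv₂, hu₂, hv₂⟩ := twodig (q+1) (le_trans hk0q (Nat.le_succ q))
  set DA : ℕ → ℕ := fun k =>
    if k < p then d k else if k = q then v else if k = q+1 then u₂ else e k with hDAdef
  set DB : ℕ → ℕ := fun k =>
    if k < p then d k else if k = q then u else if k = q+1 then v₂ else e k with hDBdef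
  have hDA : ∀ k, (DA k, y k) ∈ Λ := by
    intro k
    simp only [hDAdef]
    split_ifs with h1 h2 h3
    · exact hd k h1
    · rw [h2]; exact hv
    · rw [h3]; exact hu₂
    · exact he k
  have hDB : ∀ k, (DB k, y k) ∈ Λ := by
    intro k
    simp only [hDBdef]
    split_ifs with h1 h2 h3
    · exact hd k h1
    · rw [h2]; exact hu
    · rw [h3]; exact hv₂
    · exact he k
  have hDAlt : ∀ k, DA k < n := fun k => hdig _ _ (hDA k)
  have hDBlt : ∀ k, DB k < n := fun k => hdig _ _ (hDB k)
  set fA : ℕ → ℝ := fun k => (DA k : ℝ) / (n:ℝ)^(k+1) with hfA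
  set fB : ℕ → ℝ := fun k => (DB k : ℝ) / (n:ℝ)^(k+1) with hfB
  have sA : Summable fA := summable_digits n hn2 DA hDAlt
  have sB : Summable fB := summable_digits n hn2 DB hDBlt
  set A := ∑' k, fA k with hA
  set B := ∑' k, fB k with hB
  have sA' : Summable (fun k => fA (k + p)) := (summable_nat_add_iff p).mpr sA
  have sB' : Summable (fun k => fB (k + p)) := (summable_nat_add_iff p).mpr sB
  have hsg : Summable (fun k : ℕ => ((n:ℝ)-1)/(n:ℝ)^(k+p+1)) := geomSummable n hn2 p
  -- endpoint value equals partial sum of both fA and fB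
  have hsumA : ∑ k ∈ Finset.range p, fA k = a := by
    rw [had]
    refine Finset.sum_congr rfl fun k hk => ?_
    simp only [hfA, hDAdef, if_pos (Finset.mem_range.mp hk)]
  have hsumB : ∑ k ∈ Finset.range p, fB k = a := by
    rw [had]
    refine Finset.sum_congr rfl fun k hk => ?_
    simp only [hfB, hDBdef, if_pos (Finset.mem_range.mp hk)]
  have hsplitA : a + (∑' k, fA (k + p)) = A := by
    rw [← hsumA, hA]; exact Summable.sum_add_tsum_nat_add p sA
  have hsplitB : a + (∑' k, fB (k + p)) = B := by
    rw [← hsumB, hB]; exact Summable.sum_add_tsum_nat_add p sB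
  -- digit casts
  have hv1 : (1:ℝ) ≤ (v:ℝ) := by exact_mod_cast (by omega : 1 ≤ v)
  have hv21 : (1:ℝ) ≤ (v₂:ℝ) := by exact_mod_cast (by omega : 1 ≤ v₂)
  have hun1 : (u:ℝ) < (n:ℝ) - 1 := by
    have h1 : u + 2 ≤ n := by have := hdig _ _ hv; omega
    have : (u:ℝ) + 2 ≤ (n:ℝ) := by exact_mod_cast h1
    linarith
  have hu2n1 : (u₂:ℝ) < (n:ℝ) - 1 := by
    have h1 : u₂ + 2 ≤ n := by have := hdig _ _ hv₂; omega
    have : (u₂:ℝ) + 2 ≤ (n:ℝ) := by exact_mod_cast h1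
    linarith
  have hcastle : ∀ (D : ℕ → ℕ), (∀ k, D k < n) → ∀ k : ℕ,
      ((D (k+p) : ℝ)) / (n:ℝ)^(k+p+1) ≤ ((n:ℝ)-1)/(n:ℝ)^(k+p+1) := by
    intro D hD k
    have h1 : D (k+p) + 1 ≤ n := hD (k+p)
    have h2 : ((D (k+p):ℕ):ℝ) + 1 ≤ (n:ℝ) := by exact_mod_cast h1
    gcongr
    linarith
  -- A and B lie in the open interval
  have hqp : q - p + p = q := Nat.sub_add_cancel hpq
  have hq1p : q + 1 - p + p = q + 1 := Nat.sub_add_cancel (by omega)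
  have hnotqp : ¬ q < p := by omega
  have hnotq1p : ¬ q + 1 < p := by omega
  have hq1q : q + 1 ≠ q := by omega
  have hDAq : fA q = (v:ℝ) / (n:ℝ)^(q+1) := by
    simp [hfA, hDAdef, hnotqp]
  have hDAq1 : fA (q+1) = (u₂:ℝ) / (n:ℝ)^(q+2) := by
    simp [hfA, hDAdef, hnotq1p, hq1q]
  have hDBq : fB q = (u:ℝ) / (n:ℝ)^(q+1) := by
    simp [hfB, hDBdef, hnotqp]
  have hDBq1 : fB (q+1) = (v₂:ℝ) / (n:ℝ)^(q+2) := by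
    simp [hfB, hDBdef, hnotq1p, hq1q]
  have htailApos : (0:ℝ) < ∑' k, fA (k + p) := by
    have h1 : (0:ℝ) < fA (q - p + p) := by
      rw [hqp, hDAq]
      positivity
    exact lt_of_lt_of_le h1 (Summable.le_tsum sA' (q - p) fun j _ => by positivity)
  have htailBpos : (0:ℝ) < ∑' k, fB (k + p) := by
    have h1 : (0:ℝ) < fB (q + 1 - p + p) := by
      rw [hq1p, hDBq1]
      positivity
    exact lt_of_lt_of_le h1 (Summable.le_tsum sB' (q + 1 - p) fun j _ => by positivity)
  have htailAlt : ∑' k, fA (k + p) < ((n:ℝ)^p)⁻¹ := by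
    rw [← geom_tsum n hn2 p]
    refine Summable.tsum_lt_tsum (i := q + 1 - p) (fun k => hcastle DA hDAlt k) ?_ sA' hsg
    have hrw : fA (q + 1 - p + p) = (u₂:ℝ) / (n:ℝ)^(q+2) := by rw [hq1p, hDAq1]
    calc fA (q + 1 - p + p) = (u₂:ℝ) / (n:ℝ)^(q+2) := hrw
      _ < ((n:ℝ)-1) / (n:ℝ)^(q+2) := by gcongr
      _ = ((n:ℝ)-1) / (n:ℝ)^(q + 1 - p + p + 1) := by rw [hq1p]
  have htailBlt : ∑' k, fB (k + p) < ((n:ℝ)^p)⁻¹ := by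
    rw [← geom_tsum n hn2 p]
    refine Summable.tsum_lt_tsum (i := q - p) (fun k => hcastle DB hDBlt k) ?_ sB' hsg
    have hrw : fB (q - p + p) = (u:ℝ) / (n:ℝ)^(q+1) := by rw [hqp, hDBq]
    calc fB (q - p + p) = (u:ℝ) / (n:ℝ)^(q+1) := hrw
      _ < ((n:ℝ)-1) / (n:ℝ)^(q+1) := by gcongr
      _ = ((n:ℝ)-1) / (n:ℝ)^(q - p + p + 1) := by rw [hqp]
  have hAmem : A ∈ rowSliceSet n Λ y := ⟨DA, hDA, by rw [hA, hfA]⟩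
  have hBmem : B ∈ rowSliceSet n Λ y := ⟨DB, hDB, by rw [hB, hfB]⟩
  have hAIoo : A ∈ Set.Ioo a (a + ((n:ℝ)^p)⁻¹) :=
    ⟨by linarith [hsplitA, htailApos], by linarith [hsplitA, htailAlt]⟩
  have hBIoo : B ∈ Set.Ioo a (a + ((n:ℝ)^p)⁻¹) :=
    ⟨by linarith [hsplitB, htailBpos], by linarith [hsplitB, htailBlt]⟩
  -- the difference A - B
  have hABsub : A - B = ((v:ℝ) - u)/(n:ℝ)^(q+1) + ((u₂:ℝ) - v₂)/(n:ℝ)^(q+2) := by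
    rw [hA, hB, ← Summable.tsum_sub sA sB]
    rw [tsum_eq_sum (s := ({q, q+1} : Finset ℕ)) ?_]
    · rw [Finset.sum_pair (by omega : q ≠ q + 1)]
      rw [hDAq, hDBq, hDAq1, hDBq1]
      ring
    · intro b hb
      simp only [Finset.mem_insert, Finset.mem_singleton, not_or] at hb
      simp only [hfA, hfB, hDAdef, hDBdef]
      split_ifs with h1 h2 h3
      · exact sub_self _
      · exact absurd h2 hb.1
      · exact absurd h3 hb.2
      · exact sub_self _
  have hdiff : ((n:ℝ)^(q+2))⁻¹ ≤ A - B := by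
    rw [hABsub]
    have h1 : (1:ℝ) ≤ (v:ℝ) - u := by
      have : ((u:ℝ)) + 1 ≤ (v:ℝ) := by exact_mod_cast huv
      linarith
    have h2 : (v₂:ℝ) - u₂ ≤ (n:ℝ) - 1 := by
      have hvn : v₂ < n := hdig _ _ hv₂
      have h3 : ((v₂:ℝ)) + 1 ≤ (n:ℝ) := by exact_mod_cast hvn
      have h4 : (0:ℝ) ≤ (u₂:ℝ) := by positivity
      linarith
    have e1 : (1:ℝ)/(n:ℝ)^(q+1) - ((n:ℝ)-1)/(n:ℝ)^(q+2) = ((n:ℝ)^(q+2))⁻¹ := by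
      rw [show q+2 = (q+1)+1 from rfl, pow_succ]
      have hpow : (0:ℝ) < (n:ℝ)^(q+1) := by positivity
      field_simp
      ring
    have g1 : (1:ℝ)/(n:ℝ)^(q+1) ≤ ((v:ℝ) - u)/(n:ℝ)^(q+1) := by gcongr
    have g2 : (((1:ℝ) - n))/(n:ℝ)^(q+2) ≤ ((u₂:ℝ) - v₂)/(n:ℝ)^(q+2) := by
      have hnum : (1:ℝ) - n ≤ (u₂:ℝ) - v₂ := by linarith
      have := mul_le_mul_of_nonneg_right hnum
        (by positivity : (0:ℝ) ≤ ((n:ℝ)^(q+2))⁻¹)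
      simpa [div_eq_mul_inv] using this
    have g3 : ((1:ℝ) - n)/(n:ℝ)^(q+2) = -(((n:ℝ)-1)/(n:ℝ)^(q+2)) := by ring
    linarith
  have hfinal : ((n:ℝ)^(k₀+2))⁻¹ * ((n:ℝ)^p)⁻¹ ≤ ((n:ℝ)^(q+2))⁻¹ := by
    rw [← mul_inv, ← pow_add]
    have hle : (n:ℝ)^(q+2) ≤ (n:ℝ)^(k₀+2+p) :=
      pow_le_pow_right₀ (le_of_lt hn1) (by omega)
    have hpos : (0:ℝ) < (n:ℝ)^(q+2) := by positivity
    exact inv_anti₀ hpos hle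
  have hbounded : Bornology.IsBounded
      (rowSliceSet n Λ y ∩ Set.Ioo a (a + ((n:ℝ)^p)⁻¹)) :=
    (Metric.isBounded_Ioo _ _).subset Set.inter_subset_right
  have hdist := Metric.dist_le_diam_of_mem hbounded ⟨hAmem, hAIoo⟩ ⟨hBmem, hBIoo⟩
  rw [Real.dist_eq] at hdist
  have habs : A - B ≤ |A - B| := le_abs_self _
  linarith
end

section
/- Let K = K(n,m,Λ) be a Bedford–McMullen carpet and let (y_k)_{k≥1} be a sequence with y_k ∈ J for all k such that card(I_{y_k}) ≥ 2 for all sufficiently large k. Call an open interval G a gap of F_p if G is a connected component of U \ F for some basic open interval U of F_p. Then there exists c < 1 such that for every p ≥ 1, every gap G of F_p has length |G| ≤ c · n^{−p}. -/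
open scoped BigOperators

section Aux

variable {n : ℕ}

lemma aux_summable (hn : 2 ≤ n) (c : ℕ → ℕ) (hc : ∀ k, c k < n) :
    Summable (fun k => (c k : ℝ) / (n : ℝ) ^ (k + 1)) := by
  have h0 : (0:ℝ) < n := by exact_mod_cast Nat.lt_of_lt_of_le Nat.zero_lt_two hn
  have h1 : (1:ℝ) < n := by exact_mod_cast hn.trans_lt' Nat.one_lt_two
  refine Summable.of_nonneg_of_le (fun k => by positivity) (fun k => ?_)
    (summable_geometric_of_lt_one (r := (n:ℝ)⁻¹) (by positivity) (inv_lt_one_of_one_lt₀ h1))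
  have hck : (c k : ℝ) ≤ n := by exact_mod_cast (hc k).le
  calc (c k : ℝ) / (n:ℝ) ^ (k+1) ≤ (n:ℝ) / (n:ℝ)^(k+1) := by gcongr
  _ = ((n:ℝ)⁻¹)^k := by rw [pow_succ', inv_pow, div_mul_eq_div_div, div_self h0.ne', one_div]

lemma aux_tail_le (hn : 2 ≤ n) (c : ℕ → ℕ) (hc : ∀ k, c k < n) (r : ℕ) :
    ∑' k : ℕ, (c (k + r) : ℝ) / (n : ℝ) ^ (k + r + 1) ≤ ((n:ℝ) ^ r)⁻¹ := by
  have h0 : (0:ℝ) < n := by exact_mod_cast Nat.lt_of_lt_of_le Nat.zero_lt_two hn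
  have h1 : (1:ℝ) < n := by exact_mod_cast hn.trans_lt' Nat.one_lt_two
  have hinv : (0:ℝ) ≤ (n:ℝ)⁻¹ := by positivity
  have hinv1 : (n:ℝ)⁻¹ < 1 := inv_lt_one_of_one_lt₀ h1
  have hgeom : Summable (fun k : ℕ => (((n:ℝ) - 1) / (n:ℝ)^(r+1)) * ((n:ℝ)⁻¹) ^ k) :=
    (summable_geometric_of_lt_one hinv hinv1).mul_left _
  have hS : Summable (fun k : ℕ => (c (k + r) : ℝ) / (n : ℝ) ^ (k + r + 1)) := by
    have := (summable_nat_add_iff (f := fun k => (c k : ℝ) / (n:ℝ)^(k+1)) r).2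
      (aux_summable hn c hc)
    exact this
  have hle : ∀ k : ℕ, (c (k + r) : ℝ) / (n : ℝ) ^ (k + r + 1)
      ≤ (((n:ℝ) - 1) / (n:ℝ)^(r+1)) * ((n:ℝ)⁻¹) ^ k := by
    intro k
    have hck : (c (k + r) : ℝ) ≤ (n:ℝ) - 1 := by
      have : c (k + r) ≤ n - 1 := Nat.le_sub_one_of_lt (hc _)
      have h2 : ((c (k+r) : ℕ) : ℝ) ≤ ((n - 1 : ℕ) : ℝ) := by exact_mod_cast this
      rwa [Nat.cast_sub (by omega), Nat.cast_one] at h2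
    calc (c (k + r) : ℝ) / (n : ℝ) ^ (k + r + 1)
        ≤ ((n:ℝ) - 1) / (n : ℝ) ^ (k + r + 1) := by gcongr
      _ = (((n:ℝ) - 1) / (n:ℝ)^(r+1)) * ((n:ℝ)⁻¹) ^ k := by
          rw [inv_pow, show k + r + 1 = (r + 1) + k from by omega, pow_add,
            div_mul_eq_div_div, div_eq_mul_inv]
  calc ∑' k : ℕ, (c (k + r) : ℝ) / (n : ℝ) ^ (k + r + 1)
      ≤ ∑' k : ℕ, (((n:ℝ) - 1) / (n:ℝ)^(r+1)) * ((n:ℝ)⁻¹) ^ k :=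
        Summable.tsum_le_tsum hle hS hgeom
    _ = (((n:ℝ) - 1) / (n:ℝ)^(r+1)) * (1 - (n:ℝ)⁻¹)⁻¹ := by
        rw [tsum_mul_left, tsum_geometric_of_lt_one hinv hinv1]
    _ = ((n:ℝ) ^ r)⁻¹ := by
        rw [pow_succ]
        have hn1 : (n:ℝ) - 1 ≠ 0 := by linarith
        field_simp

lemma aux_finsum_le (hn : 2 ≤ n) (c : ℕ → ℕ) (hc : ∀ k, c k < n) :
    ∀ p q : ℕ, p ≤ q →
    ∑ k ∈ Finset.Ico p q, (c k : ℝ) / (n : ℝ) ^ (k + 1) ≤ ((n:ℝ)^p)⁻¹ - ((n:ℝ)^q)⁻¹ := by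
  have h0 : (0:ℝ) < n := by exact_mod_cast Nat.lt_of_lt_of_le Nat.zero_lt_two hn
  intro p q hpq
  induction q, hpq using Nat.le_induction with
  | base => simp
  | succ q hpq ih =>
    rw [Finset.sum_Ico_succ_top hpq]
    have hck : (c q : ℝ) ≤ (n:ℝ) - 1 := by
      have : c q ≤ n - 1 := Nat.le_sub_one_of_lt (hc _)
      have h2 : ((c q : ℕ) : ℝ) ≤ ((n - 1 : ℕ) : ℝ) := by exact_mod_cast this
      rwa [Nat.cast_sub (by omega), Nat.cast_one] at h2
    have key : ((n:ℝ)^q)⁻¹ - ((n:ℝ)^(q+1))⁻¹ = ((n:ℝ) - 1) / (n:ℝ)^(q+1) := by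
      rw [pow_succ]; field_simp
    have : (c q : ℝ) / (n:ℝ)^(q+1) ≤ ((n:ℝ) - 1) / (n:ℝ)^(q+1) := by gcongr
    linarith [this, ih]

end Aux

theorem gaps_are_short
    (n m : ℕ) (Λ : Finset (ℕ × ℕ))
    (hm : 2 ≤ m) (hnm : m < n)
    (hΛsub : Λ ⊆ Finset.range n ×ˢ Finset.range m)
    (hΛ1 : 1 < Λ.card) (hΛ2 : Λ.card < m * n)
    (y : ℕ → ℕ) (hy : ∀ k, ∃ i, (i, y k) ∈ Λ)
    (hbig : ∃ k₀ : ℕ, ∀ k ≥ k₀, 2 ≤ (rowDigits Λ (y k)).card) :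
    ∃ c : ℝ, c < 1 ∧ ∀ p : ℕ, 1 ≤ p →
      ∀ a ∈ basicLeftEndpoints n Λ y p,
        ∀ x ∈ Set.Ioo a (a + ((n : ℝ) ^ p)⁻¹) \ rowSliceSet n Λ y,
          Metric.diam
              (connectedComponentIn
                (Set.Ioo a (a + ((n : ℝ) ^ p)⁻¹) \ rowSliceSet n Λ y) x)
            ≤ c * ((n : ℝ) ^ p)⁻¹ := by
  obtain ⟨k₀, hk₀⟩ := hbig
  have hn2 : 2 ≤ n := by omega
  have h0 : (0:ℝ) < n := by exact_mod_cast (by omega : 0 < n)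
  have h1 : (1:ℝ) < n := by exact_mod_cast (by omega : 1 < n)
  have hΛn : ∀ i j, (i, j) ∈ Λ → i < n := by
    intro i j hij
    have := hΛsub hij
    simp only [Finset.mem_product, Finset.mem_range] at this
    exact this.1
  choose e hE using hy
  have hEn : ∀ k, e k < n := fun k => hΛn _ _ (hE k)
  have hrow : ∀ j i, i ∈ rowDigits Λ j → (i, j) ∈ Λ := by
    intro j i hi
    simp only [rowDigits, Finset.mem_image, Finset.mem_filter] at hi
    obtain ⟨⟨u', v'⟩, ⟨hmem, h2⟩, h1'⟩ := hi
    simp only at h2 h1'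
    subst h2; subst h1'; exact hmem
  have hpair : ∀ k, ∃ uv : ℕ × ℕ, k₀ ≤ k →
      (uv.1 < uv.2 ∧ (uv.1, y k) ∈ Λ ∧ (uv.2, y k) ∈ Λ) := by
    intro k
    by_cases hk : k₀ ≤ k
    · obtain ⟨a, ha, b, hb, hab⟩ := Finset.one_lt_card.mp (hk₀ k hk)
      have haΛ := hrow _ _ ha
      have hbΛ := hrow _ _ hb
      rcases lt_or_gt_of_ne hab with h | h
      · exact ⟨(a, b), fun _ => ⟨h, haΛ, hbΛ⟩⟩
      · exact ⟨(b, a), fun _ => ⟨h, hbΛ, haΛ⟩⟩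
    · exact ⟨(0, 0), fun h => absurd h hk⟩
  choose uv huv using hpair
  refine ⟨1 - ((n:ℝ)⁻¹) ^ (k₀ + 1), sub_lt_self _ (by positivity), ?_⟩
  intro p hp a ha x hx
  obtain ⟨d, hd, hA⟩ := ha
  set P : ℝ := ((n:ℝ) ^ p)⁻¹ with hPdef
  set F : Set ℝ := rowSliceSet n Λ y with hFdef
  set S : Set ℝ := Set.Ioo a (a + P) \ F with hSdef
  set q : ℕ := max p k₀ with hqdef
  have hpq : p ≤ q := le_max_left _ _
  have hqk : k₀ ≤ q := le_max_right _ _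
  have hqpk : q ≤ p + k₀ := max_le (by omega) (by omega)
  obtain ⟨hi12, hi1Λ, hi2Λ⟩ := huv q hqk
  set i1 : ℕ := (uv q).1
  set i2 : ℕ := (uv q).2
  have hi2n : i2 < n := hΛn _ _ hi2Λ
  set D1 : ℕ → ℕ := fun k => if k < p then d k else if k = q then i1 else e k with hD1def
  set D2 : ℕ → ℕ := fun k => if k < p then d k else if k = q then i2 else e k with hD2def
  have hD1Λ : ∀ k, (D1 k, y k) ∈ Λ := by
    intro k
    simp only [hD1def]
    split_ifs with h h'
    · exact hd k h
    · rw [h']; exact hi1Λ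
    · exact hE k
  have hD2Λ : ∀ k, (D2 k, y k) ∈ Λ := by
    intro k
    simp only [hD2def]
    split_ifs with h h'
    · exact hd k h
    · rw [h']; exact hi2Λ
    · exact hE k
  have hD1n : ∀ k, D1 k < n := fun k => hΛn _ _ (hD1Λ k)
  have hD2n : ∀ k, D2 k < n := fun k => hΛn _ _ (hD2Λ k)
  set f1 : ℝ := ∑' k : ℕ, (D1 k : ℝ) / (n:ℝ) ^ (k + 1) with hf1def
  set f2 : ℝ := ∑' k : ℕ, (D2 k : ℝ) / (n:ℝ) ^ (k + 1) with hf2def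
  have hf1F : f1 ∈ F := ⟨D1, hD1Λ, rfl⟩
  have hf2F : f2 ∈ F := ⟨D2, hD2Λ, rfl⟩
  set M : ℝ := ∑ k ∈ Finset.Ico p q, (e k : ℝ) / (n:ℝ) ^ (k + 1) with hMdef
  set t : ℝ := ∑' k : ℕ, (e (k + (q + 1)) : ℝ) / (n:ℝ) ^ (k + (q + 1) + 1) with htdef
  have hM0 : 0 ≤ M := Finset.sum_nonneg fun k _ => by positivity
  have hMle : M ≤ ((n:ℝ)^p)⁻¹ - ((n:ℝ)^q)⁻¹ := aux_finsum_le hn2 e hEn p q hpq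
  have ht0 : 0 ≤ t := tsum_nonneg fun k => by positivity
  have htle : t ≤ ((n:ℝ)^(q+1))⁻¹ := aux_tail_le hn2 e hEn (q + 1)
  -- decompositions
  have hdecomp : ∀ (D : ℕ → ℕ), (∀ k, D k < n) → (∀ k < p, D k = d k) →
      (∀ k, p ≤ k → k ≠ q → D k = e k) →
      ∑' k : ℕ, (D k : ℝ) / (n:ℝ) ^ (k + 1)
        = a + M + (D q : ℝ) / (n:ℝ) ^ (q + 1) + t := by
    intro D hDn hDd hDe
    have hS := aux_summable hn2 D hDn
    have hsplit := Summable.sum_add_tsum_nat_add (f := fun k => (D k : ℝ) / (n:ℝ) ^ (k + 1))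
      (q + 1) hS
    have htail : ∑' k : ℕ, (D (k + (q + 1)) : ℝ) / (n:ℝ) ^ (k + (q + 1) + 1) = t := by
      refine tsum_congr fun k => ?_
      rw [hDe (k + (q + 1)) (by omega) (by omega)]
    have hfin : ∑ k ∈ Finset.range (q + 1), (D k : ℝ) / (n:ℝ) ^ (k + 1)
        = a + M + (D q : ℝ) / (n:ℝ) ^ (q + 1) := by
      rw [Finset.range_eq_Ico, ← Finset.sum_Ico_consecutive _ (Nat.zero_le p) (by omega),
        Finset.sum_Ico_succ_top hpq]
      have e1 : ∑ k ∈ Finset.Ico 0 p, (D k : ℝ) / (n:ℝ) ^ (k + 1) = a := by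
        rw [hA, ← Finset.range_eq_Ico]
        refine Finset.sum_congr rfl fun k hk => ?_
        rw [hDd k (Finset.mem_range.mp hk)]
      have e2 : ∑ k ∈ Finset.Ico p q, (D k : ℝ) / (n:ℝ) ^ (k + 1) = M := by
        refine Finset.sum_congr rfl fun k hk => ?_
        rw [Finset.mem_Ico] at hk
        rw [hDe k hk.1 (by omega)]
      rw [e1, e2]
      ring
    rw [← hsplit, hfin, htail]
  have hf1eq : f1 = a + M + (i1 : ℝ) / (n:ℝ) ^ (q + 1) + t := by
    have := hdecomp D1 hD1n (fun k hk => by simp [hD1def, hk])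
      (fun k hk1 hk2 => by simp [hD1def, hk2, Nat.not_lt.mpr hk1, if_neg])
    rw [hf1def, this]
    congr 2
    simp [hD1def, Nat.not_lt.mpr hpq]
  have hf2eq : f2 = a + M + (i2 : ℝ) / (n:ℝ) ^ (q + 1) + t := by
    have := hdecomp D2 hD2n (fun k hk => by simp [hD2def, hk])
      (fun k hk1 hk2 => by simp [hD2def, hk2, Nat.not_lt.mpr hk1, if_neg])
    rw [hf2def, this]
    congr 2
    simp [hD2def, Nat.not_lt.mpr hpq]
  -- numeric bounds
  have hQpos : (0:ℝ) < ((n:ℝ)^(q+1))⁻¹ := by positivity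
  have hi1R : (i1 : ℝ) ≤ (n:ℝ) - 2 := by
    have : i1 + 2 ≤ n := by omega
    have := (Nat.cast_le (α := ℝ)).mpr this
    push_cast at this
    linarith
  have hi2R : (i2 : ℝ) ≤ (n:ℝ) - 1 := by
    have : i2 + 1 ≤ n := by omega
    have := (Nat.cast_le (α := ℝ)).mpr this
    push_cast at this
    linarith
  have hi2R1 : (1:ℝ) ≤ (i2 : ℝ) := by exact_mod_cast (by omega : 1 ≤ i2)
  have hi12R : (i1 : ℝ) < (i2 : ℝ) := by exact_mod_cast hi12
  have hQsplit : ((n:ℝ)^q)⁻¹ - ((n:ℝ)^(q+1))⁻¹ = ((n:ℝ) - 1) / (n:ℝ)^(q+1) := by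
    rw [pow_succ]; field_simp
  have hdiv1 : (i1 : ℝ) / (n:ℝ)^(q+1) ≤ ((n:ℝ) - 2) / (n:ℝ)^(q+1) := by gcongr
  have hdiv2 : (i2 : ℝ) / (n:ℝ)^(q+1) ≤ ((n:ℝ) - 1) / (n:ℝ)^(q+1) := by gcongr
  have hdiv2' : ((n:ℝ)^(q+1))⁻¹ ≤ (i2 : ℝ) / (n:ℝ)^(q+1) := by
    rw [inv_eq_one_div]; gcongr
  have hsplit2 : ((n:ℝ) - 2) / (n:ℝ)^(q+1)
      = ((n:ℝ) - 1) / (n:ℝ)^(q+1) - ((n:ℝ)^(q+1))⁻¹ := by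
    field_simp
    ring
  have hcP : (1 - ((n:ℝ)⁻¹) ^ (k₀ + 1)) * P = P - ((n:ℝ)^(p + k₀ + 1))⁻¹ := by
    have : ((n:ℝ)⁻¹) ^ (k₀ + 1) * ((n:ℝ)^p)⁻¹ = ((n:ℝ)^(p + k₀ + 1))⁻¹ := by
      rw [inv_pow, ← mul_inv, ← pow_add, show k₀ + 1 + p = p + k₀ + 1 from by omega]
    rw [hPdef, sub_mul, one_mul, this]
  have hQ1ge : ((n:ℝ)^(p + k₀ + 1))⁻¹ ≤ ((n:ℝ)^(q+1))⁻¹ := by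
    refine inv_anti₀ (by positivity) (pow_le_pow_right₀ h1.le (by omega))
  have hQleP : ((n:ℝ)^q)⁻¹ ≤ P := by
    rw [hPdef]
    exact inv_anti₀ (by positivity) (pow_le_pow_right₀ h1.le hpq)
  have haf1 : a ≤ f1 := by
    have : (0:ℝ) ≤ (i1 : ℝ) / (n:ℝ)^(q+1) := by positivity
    rw [hf1eq]; linarith
  have hf1f2 : f1 < f2 := by
    rw [hf1eq, hf2eq]
    have : (i1 : ℝ) / (n:ℝ)^(q+1) < (i2 : ℝ) / (n:ℝ)^(q+1) := by gcongr
    linarith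
  have hf2b : f2 ≤ a + P := by
    rw [hf2eq]
    linarith [hMle, hdiv2, htle, hQsplit]
  have final1 : f1 - a ≤ (1 - ((n:ℝ)⁻¹) ^ (k₀ + 1)) * P := by
    rw [hf1eq, hcP]
    linarith [hMle, hdiv1, htle, hQsplit, hsplit2, hQ1ge, hQleP]
  have final2 : f2 - f1 ≤ (1 - ((n:ℝ)⁻¹) ^ (k₀ + 1)) * P := by
    rw [hf1eq, hf2eq, hcP]
    have : (i2 : ℝ) / (n:ℝ)^(q+1) - (i1 : ℝ) / (n:ℝ)^(q+1)
        ≤ ((n:ℝ) - 1) / (n:ℝ)^(q+1) := by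
      have h1' : (0:ℝ) ≤ (i1 : ℝ) / (n:ℝ)^(q+1) := by positivity
      linarith [hdiv2]
    linarith [hQsplit, hQ1ge, hQleP]
  have final3 : (a + P) - f2 ≤ (1 - ((n:ℝ)⁻¹) ^ (k₀ + 1)) * P := by
    rw [hf2eq, hcP]
    linarith [hdiv2', hQ1ge]
  -- topology
  have hxS : x ∈ S := hx
  have hxmem : x ∈ connectedComponentIn S x := mem_connectedComponentIn hxS
  have hsubS : connectedComponentIn S x ⊆ S := connectedComponentIn_subset S x
  have hord : (connectedComponentIn S x).OrdConnected :=
    (isPreconnected_connectedComponentIn).ordConnected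
  have hxF : x ∉ F := hx.2
  rcases lt_trichotomy x f1 with hc1 | hc1 | hc1
  · have hsub : connectedComponentIn S x ⊆ Set.Ioo a f1 := by
      intro z hz
      have hzS := hsubS hz
      refine ⟨hzS.1.1, ?_⟩
      by_contra hzf
      push_neg at hzf
      have : f1 ∈ connectedComponentIn S x :=
        hord.out hxmem hz ⟨hc1.le, hzf⟩
      exact (hsubS this).2 hf1F
    calc Metric.diam (connectedComponentIn S x)
        ≤ Metric.diam (Set.Ioo a f1) :=
          Metric.diam_mono hsub (Metric.isBounded_Ioo a f1)
      _ = f1 - a := Real.diam_Ioo haf1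
      _ ≤ (1 - ((n:ℝ)⁻¹) ^ (k₀ + 1)) * P := final1
  · exact absurd (hc1 ▸ hf1F) hxF
  · rcases lt_trichotomy x f2 with hc2 | hc2 | hc2
    · have hsub : connectedComponentIn S x ⊆ Set.Ioo f1 f2 := by
        intro z hz
        constructor
        · by_contra hzf
          push_neg at hzf
          have : f1 ∈ connectedComponentIn S x :=
            hord.out hz hxmem ⟨hzf, hc1.le⟩
          exact (hsubS this).2 hf1F
        · by_contra hzf
          push_neg at hzf
          have : f2 ∈ connectedComponentIn S x :=
            hord.out hxmem hz ⟨hc2.le, hzf⟩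
          exact (hsubS this).2 hf2F
      calc Metric.diam (connectedComponentIn S x)
          ≤ Metric.diam (Set.Ioo f1 f2) :=
            Metric.diam_mono hsub (Metric.isBounded_Ioo f1 f2)
        _ = f2 - f1 := Real.diam_Ioo hf1f2.le
        _ ≤ (1 - ((n:ℝ)⁻¹) ^ (k₀ + 1)) * P := final2
    · exact absurd (hc2 ▸ hf2F) hxF
    · have hsub : connectedComponentIn S x ⊆ Set.Ioo f2 (a + P) := by
        intro z hz
        have hzS := hsubS hz
        refine ⟨?_, hzS.1.2⟩
        by_contra hzf
        push_neg at hzf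
        have : f2 ∈ connectedComponentIn S x :=
          hord.out hz hxmem ⟨hzf, hc2.le⟩
        exact (hsubS this).2 hf2F
      calc Metric.diam (connectedComponentIn S x)
          ≤ Metric.diam (Set.Ioo f2 (a + P)) :=
            Metric.diam_mono hsub (Metric.isBounded_Ioo f2 (a + P))
        _ = (a + P) - f2 := Real.diam_Ioo hf2b
        _ ≤ (1 - ((n:ℝ)⁻¹) ^ (k₀ + 1)) * P := final3
end
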